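/- Let G be a multigraph and k a positive integer, and let C₁ and C₂ be two distinct equivalence classes of the relation R^k on the vertices of G. Then any family of pairwise edge-disjoint paths in G, each path having one endpoint in C₁ and the other endpoint in C₂, has cardinality at most k − 1. -/

import Mathlib

/-- A multigraph on vertex type `V` with edge type `E`: each edge is assigned
an unordered pair of endpoints (parallel edges and loops are allowed). -/
structure Multigraph (V : Type) (E : Type) where
  ends : E → Sym2 V

namespace Multigraph

variable {V E : Type}

/-- Walks in a multigraph, recorded as the sequence of traversed edges. -/
inductive Walk (G : Multigraph V E) : V → V → Type
  | nil (v : V) : Walk G v v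
  | cons {u v w : V} (e : E) (he : G.ends e = s(u, v)) (p : Walk G v w) : Walk G u w

/-- The list of edges traversed by a walk. -/
def Walk.edges {G : Multigraph V E} : ∀ {u v : V}, G.Walk u v → List E
  | _, _, .nil _ => []
  | _, _, .cons e _ p => e :: p.edges

/-- The list of vertices visited by a walk, in order. -/
def Walk.support {G : Multigraph V E} : ∀ {u v : V}, G.Walk u v → List V
  | _, _, .nil v => [v]
  | u, _, .cons _ _ p => u :: p.support

/-- A path is a walk visiting no vertex twice. -/
def Walk.IsPath {G : Multigraph V E} {u v : V} (p : G.Walk u v) : Prop :=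
  p.support.Nodup

/-- There exist `k` pairwise edge-disjoint `u`–`v` paths in `G`. -/
def HasEdgeDisjointPaths (G : Multigraph V E) (k : ℕ) (u v : V) : Prop :=
  ∃ f : Fin k → G.Walk u v, (∀ i, (f i).IsPath) ∧
    ∀ i j, i ≠ j → ∀ e, e ∈ (f i).edges → e ∉ (f j).edges

/-- `G` is `k`-edge-connected: it has more than one vertex and any two distinct
vertices are joined by at least `k` pairwise edge-disjoint paths. -/
def EdgeConnected (G : Multigraph V E) (k : ℕ) : Prop :=
  (∃ u v : V, u ≠ v) ∧ ∀ u v : V, u ≠ v → G.HasEdgeDisjointPaths k u v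

/-- Deletion of the edge `e₀`. -/
def deleteEdge (G : Multigraph V E) (e₀ : E) : Multigraph V {e : E // e ≠ e₀} :=
  ⟨fun e => G.ends e.1⟩

/-- `G` is an edge-minimal `k`-edge-connected multigraph. -/
def EdgeMinimal (G : Multigraph V E) (k : ℕ) : Prop :=
  G.EdgeConnected k ∧ ∀ e₀ : E, ¬ (G.deleteEdge e₀).EdgeConnected k

/-- The unordered pair of endpoints of an edge, as a multiset. -/
def _root_.Sym2.toMset {α : Type*} : Sym2 α → Multiset α :=
  Sym2.lift ⟨fun a b => {a, b}, fun a b => Multiset.cons_swap a b 0⟩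

open Classical in
/-- The degree of a vertex: the number of edge-endpoints at `v`, counting
parallel edges with multiplicity (and loops twice). -/
noncomputable def degree (G : Multigraph V E) [Fintype E] (v : V) : ℕ :=
  ∑ e : E, Multiset.count v (G.ends e).toMset

/-- The relation `R^k`: `v₁ R^k v₂` iff `v₁ = v₂` or there are `k` pairwise
edge-disjoint paths between `v₁` and `v₂`. -/
def Rel (G : Multigraph V E) (k : ℕ) (v₁ v₂ : V) : Prop :=
  v₁ = v₂ ∨ G.HasEdgeDisjointPaths k v₁ v₂

/-- `C` is an equivalence class of the relation `r`. -/
def IsClassOf {V : Type} (r : V → V → Prop) (C : Set V) : Prop :=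
  ∃ v : V, C = {u : V | r u v}

end Multigraph

/-! If `k` pairwise edge-disjoint walks join vertices `R^k`-related to `u` to vertices
`R^k`-related to `v`, then fewer than `k` edges cannot separate `u` from `v`: one of the walks
avoids them, and so do suitable connections of its ends to `u` and `v`. By Menger's theorem,
`u` and `v` are then joined by `k` edge-disjoint paths, i.e. `u R^k v`, so the two classes
coincide.

Menger's theorem is proved with unit flows and augmenting paths inside a finite set of edges:
if no augmenting path exists, the edges carrying flow out of the residual component of the
source form a cut whose size is the value of the flow. -/

namespace Multigraph

variable {V E : Type} {G : Multigraph V E}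

open Finset Relation Function

namespace Walk

@[simp] lemma edges_nil (v : V) : (nil v : G.Walk v v).edges = [] := rfl

@[simp] lemma edges_cons {u v w : V} (e : E) (he : G.ends e = s(u, v)) (p : G.Walk v w) :
    (cons e he p).edges = e :: p.edges := rfl

lemma start_mem_support {u v : V} : ∀ p : G.Walk u v, u ∈ p.support
  | nil _ => List.mem_singleton_self _
  | cons _ _ _ => List.mem_cons_self

lemma mem_support_of_mem_edges {u v x : V} {e : E} :
    ∀ p : G.Walk u v, e ∈ p.edges → x ∈ G.ends e → x ∈ p.support
  | nil _, he, _ => by simp at he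
  | cons e' he' p, he, hx => by
      rcases List.mem_cons.1 he with rfl | he
      · rw [he'] at hx
        rcases Sym2.mem_iff.1 hx with rfl | rfl
        · exact List.mem_cons_self
        · exact List.mem_cons_of_mem _ p.start_mem_support
      · exact List.mem_cons_of_mem _ (p.mem_support_of_mem_edges he hx)

def AllDarts (P : E → V → V → Prop) : ∀ {u v : V}, G.Walk u v → Prop
  | _, _, nil _ => True
  | u, _, cons (v := w) e _ p => P e u w ∧ p.AllDarts P

variable {P Q : E → V → V → Prop}

lemma AllDarts.mono (hPQ : ∀ e x y, P e x y → Q e x y) :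
    ∀ {u v : V} {p : G.Walk u v}, p.AllDarts P → p.AllDarts Q
  | _, _, nil _, _ => trivial
  | _, _, cons _ _ _, h => ⟨hPQ _ _ _ h.1, h.2.mono hPQ⟩

lemma AllDarts.exists_of_mem_edges :
    ∀ {u v : V} {p : G.Walk u v}, p.AllDarts P → ∀ e ∈ p.edges, ∃ x y, P e x y
  | _, _, nil _, _, _, he => by simp at he
  | _, _, cons _ _ _, h, _, he => by
      rcases List.mem_cons.1 he with rfl | he
      · exact ⟨_, _, h.1⟩
      · exact h.2.exists_of_mem_edges _ he

lemma exists_suffix_of_mem_support {w v x : V} :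
    ∀ (p : G.Walk w v), x ∈ p.support → p.AllDarts P →
      ∃ q : G.Walk x v, q.support <:+ p.support ∧ q.AllDarts P
  | nil _, hx, hp => by
      obtain rfl := List.mem_singleton.1 hx
      exact ⟨nil _, List.suffix_refl _, hp⟩
  | cons e he p, hx, hp => by
      by_cases hxw : x = w
      · subst hxw
        exact ⟨cons e he p, List.suffix_refl _, hp⟩
      · obtain ⟨q, hq, hqP⟩ := p.exists_suffix_of_mem_support
          ((List.mem_cons.1 hx).resolve_left hxw) hp.2
        exact ⟨q, hq.trans (List.suffix_cons _ _), hqP⟩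

end Walk

def StepRel (G : Multigraph V E) (P : E → V → V → Prop) (x y : V) : Prop :=
  ∃ e, G.ends e = s(x, y) ∧ P e x y

lemma exists_isPath_of_reflTransGen {P : E → V → V → Prop} {u v : V}
    (h : ReflTransGen (G.StepRel P) u v) : ∃ p : G.Walk u v, p.IsPath ∧ p.AllDarts P := by
  induction h using ReflTransGen.head_induction_on with
  | refl => exact ⟨.nil v, List.nodup_singleton v, trivial⟩
  | @head u w hstep _ ih =>
    obtain ⟨e, he, hP⟩ := hstep
    obtain ⟨q, hq, hqP⟩ := ih
    by_cases hu : u ∈ q.support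
    · obtain ⟨r, hr, hrP⟩ := q.exists_suffix_of_mem_support hu hqP
      exact ⟨r, hr.sublist.nodup hq, hrP⟩
    · exact ⟨.cons e he q, List.nodup_cons.2 ⟨hu, hq⟩, hP, hqP⟩

def Reachable (G : Multigraph V E) (S : Set E) : V → V → Prop :=
  ReflTransGen (G.StepRel fun e _ _ => e ∈ S)

namespace Reachable

variable {S T : Set E} {u v w : V}

lemma symm (h : G.Reachable S u v) : G.Reachable S v u :=
  reflTransGen_swap.1 <|
    ReflTransGen.mono (fun _ _ ⟨e, he, heS⟩ => ⟨e, he.trans Sym2.eq_swap, heS⟩) _ _ h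

lemma trans (h : G.Reachable S u v) (h' : G.Reachable S v w) : G.Reachable S u w :=
  ReflTransGen.trans h h'

lemma mono (hST : S ⊆ T) (h : G.Reachable S u v) : G.Reachable T u v :=
  ReflTransGen.mono (fun _ _ ⟨e, he, heS⟩ => ⟨e, he, hST heS⟩) _ _ h

end Reachable

lemma Walk.reachable {S : Set E} :
    ∀ {u v : V} (p : G.Walk u v), (∀ e ∈ p.edges, e ∈ S) → G.Reachable S u v
  | _, _, nil _, _ => ReflTransGen.refl
  | _, _, cons e he p, hS =>
      ReflTransGen.head ⟨e, he, hS e List.mem_cons_self⟩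
        (p.reachable fun e' he' => hS e' (List.mem_cons_of_mem _ he'))

section Flow

/-- `f e = some (a, b)` means that `e` carries one unit of flow from `a` to `b`, and
`f e = none` that `e` is unused; only edges of `A` may be used. -/
def OrientsWithin (G : Multigraph V E) (A : Finset E) (f : E → Option (V × V)) : Prop :=
  ∀ e a b, f e = some (a, b) → e ∈ A ∧ G.ends e = s(a, b)

noncomputable def outflow : Option (V × V) → V →₀ ℤ
  | none => 0
  | some (a, b) => Finsupp.single a 1 - Finsupp.single b 1

noncomputable def netOutflow (A : Finset E) (f : E → Option (V × V)) : V →₀ ℤ :=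
  ∑ e ∈ A, outflow (f e)

structure IsFlow (G : Multigraph V E) (A : Finset E) (s t : V) (j : ℕ)
    (f : E → Option (V × V)) : Prop where
  orientsWithin : G.OrientsWithin A f
  netOutflow_eq : netOutflow A f = j • outflow (some (s, t))

def Residual (A : Finset E) (f : E → Option (V × V)) (e : E) (x y : V) : Prop :=
  (e ∈ A ∧ f e = none) ∨ f e = some (y, x)

variable {A : Finset E} {f : E → Option (V × V)}

section Update

variable [DecidableEq E]

lemma netOutflow_update {e : E} (he : e ∈ A) (o : Option (V × V)) :
    netOutflow A (update f e o) = netOutflow A f - outflow (f e) + outflow o := by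
  unfold netOutflow
  rw [← add_sum_erase A _ he, ← add_sum_erase A _ he, update_self,
    sum_congr rfl fun x hx => by rw [update_of_ne (ne_of_mem_erase hx)]]
  abel

lemma orientsWithin_update (hf : G.OrientsWithin A f) {e : E} {o : Option (V × V)}
    (ho : ∀ a b, o = some (a, b) → e ∈ A ∧ G.ends e = s(a, b)) :
    G.OrientsWithin A (update f e o) := by
  intro e' a b h
  by_cases he' : e' = e
  · subst he'
    exact ho a b (by rwa [update_self] at h)
  · exact hf e' a b (by rwa [update_of_ne he'] at h)

lemma OrientsWithin.exists_push {e : E} {x y : V} (hf : G.OrientsWithin A f)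
    (he : G.ends e = s(x, y)) (hres : Residual A f e x y) :
    ∃ o, G.OrientsWithin A (update f e o) ∧
      netOutflow A (update f e o) = netOutflow A f + outflow (some (x, y)) ∧
      (o = none ↔ f e ≠ none) := by
  rcases hres with ⟨heA, hfe⟩ | hfe
  · refine ⟨some (x, y), orientsWithin_update hf ?_, ?_, by simp [hfe]⟩
    · rintro a b ⟨⟩
      exact ⟨heA, he⟩
    · rw [netOutflow_update heA, hfe, outflow, sub_zero]
  · refine ⟨none, orientsWithin_update hf (by simp), ?_, by simp [hfe]⟩
    rw [netOutflow_update (hf e y x hfe).1, hfe]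
    simp only [outflow]
    abel

end Update

lemma OrientsWithin.exists_augment (hf : G.OrientsWithin A f) {x y : V} (p : G.Walk x y)
    (hp : p.IsPath) (hres : p.AllDarts (Residual A f)) :
    ∃ f', G.OrientsWithin A f' ∧ netOutflow A f' = netOutflow A f + outflow (some (x, y)) ∧
      (∀ e ∉ p.edges, f' e = f e) ∧ ∀ e ∈ p.edges, (f' e = none ↔ f e ≠ none) := by
  classical
  induction p with
  | nil x => exact ⟨f, hf, by simp [outflow], fun _ _ => rfl, by simp⟩
  | @cons x w y e he p ih =>
    have hp' := List.nodup_cons.1 hp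
    obtain ⟨f₁, hf₁, hnet₁, hoff₁, hon₁⟩ := ih hp'.2 hres.2
    have hep : e ∉ p.edges := fun h =>
      hp'.1 (p.mem_support_of_mem_edges h (he ▸ Sym2.mem_mk_left x w))
    have hfe : f₁ e = f e := hoff₁ e hep
    obtain ⟨o, ho, hnet, hiff⟩ := hf₁.exists_push he (by rw [Residual, hfe]; exact hres.1)
    refine ⟨update f₁ e o, ho, ?_, fun e' he' => ?_, fun e' he' => ?_⟩
    · rw [hnet, hnet₁]
      simp only [outflow]
      abel
    · rw [Walk.edges_cons, List.mem_cons, not_or] at he'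
      rw [update_of_ne he'.1, hoff₁ e' he'.2]
    · by_cases h : e' = e
      · subst h
        rw [update_self, hiff, hfe]
      · rw [update_of_ne h]
        exact hon₁ e' ((List.mem_cons.1 he').resolve_left h)

open Classical in
noncomputable def leavingEdges (A : Finset E) (f : E → Option (V × V)) (R : Set V) :
    Finset E :=
  A.filter fun e => ∃ a b, f e = some (a, b) ∧ a ∈ R ∧ b ∉ R

lemma IsFlow.card_leavingEdges_le {s t : V} {j : ℕ} (hf : G.IsFlow A s t j f) (R : Set V)
    (hR : ∀ e a b, f e = some (a, b) → b ∈ R → a ∈ R) :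
    (#(leavingEdges A f R) : ℤ) ≤ j * (R.indicator 1 s - R.indicator 1 t) := by
  classical
  -- `cross` sends a unit of flow to `1` if it leaves `R`, to `-1` if it enters `R`, else to `0`
  let cross := Finsupp.linearCombination ℤ (R.indicator (1 : V → ℤ))
  have hsum : ∑ e ∈ A, cross (outflow (f e)) = j * (R.indicator 1 s - R.indicator 1 t) := by
    rw [← map_sum, ← netOutflow, hf.netOutflow_eq, map_nsmul]
    simp [cross, outflow]
  rw [← hsum, leavingEdges, card_filter, Nat.cast_sum]
  refine sum_le_sum fun e _ => ?_
  rcases hfe : f e with _ | ⟨a, b⟩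
  · simp [outflow]
  · have := hR e a b hfe
    by_cases ha : a ∈ R <;> by_cases hb : b ∈ R <;> simp_all [cross, outflow]

variable {s t : V} {j : ℕ}

/-- Following flow backwards from the sink leads to the source: otherwise the vertices reached
would form a set that flow enters but never leaves. -/
lemma IsFlow.exists_path_backward (hf : G.IsFlow A s t (j + 1) f) :
    ∃ p : G.Walk t s, p.IsPath ∧ p.AllDarts fun e x y => f e = some (y, x) := by
  let R := {w | ReflTransGen (G.StepRel fun e x y => f e = some (y, x)) t w}
  by_cases hs : s ∈ R
  · exact exists_isPath_of_reflTransGen hs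
  have hR : ∀ e a b, f e = some (a, b) → b ∈ R → a ∈ R := fun e a b hfe hb =>
    ReflTransGen.tail hb ⟨e, (hf.orientsWithin e a b hfe).2.trans Sym2.eq_swap, hfe⟩
  have := hf.card_leavingEdges_le R hR
  rw [Set.indicator_of_notMem hs, Set.indicator_of_mem (show t ∈ R from .refl)] at this
  simp at this
  omega

lemma IsFlow.exists_edgeDisjoint_paths :
    ∀ {j : ℕ} {f : E → Option (V × V)}, G.IsFlow A s t j f →
      ∃ W : Fin j → G.Walk t s, (∀ i, (W i).IsPath) ∧ (∀ i, ∀ e ∈ (W i).edges, f e ≠ none) ∧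
        ∀ i i', i ≠ i' → ∀ e ∈ (W i).edges, e ∉ (W i').edges
  | 0, _, _ => ⟨Fin.elim0, fun i => i.elim0, fun i => i.elim0, fun i => i.elim0⟩
  | j + 1, f, hf => by
    obtain ⟨p, hp, hpf⟩ := hf.exists_path_backward
    have hused : ∀ e ∈ p.edges, f e ≠ none := fun e he => by
      obtain ⟨x, y, h⟩ := hpf.exists_of_mem_edges e he
      simp [h]
    obtain ⟨f', hf', hnet, hoff, hon⟩ :=
      hf.orientsWithin.exists_augment p hp (hpf.mono fun _ _ _ h => .inr h)
    have hflow : G.IsFlow A s t j f' := ⟨hf', by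
      rw [hnet, hf.netOutflow_eq, succ_nsmul]
      simp only [outflow]
      abel⟩
    obtain ⟨W, hW, hWf', hWdisj⟩ := exists_edgeDisjoint_paths hflow
    have hWp : ∀ i, ∀ e ∈ (W i).edges, e ∉ p.edges := fun i e he hep =>
      hWf' i e he ((hon e hep).2 (hused e hep))
    refine ⟨Fin.cons p W, Fin.cases hp hW, fun i e he => ?_, fun i i' hii' => ?_⟩
    · cases i using Fin.cases with
      | zero => exact hused e he
      | succ i =>
        rw [Fin.cons_succ] at he
        rw [← hoff e (hWp i e he)]
        exact hWf' i e he
    · cases i using Fin.cases <;> cases i' using Fin.cases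
      · exact absurd rfl hii'
      · exact fun e he he' => hWp _ e he' he
      · exact hWp _
      · exact hWdisj _ _ (fun h => hii' (congrArg Fin.succ h))

lemma IsFlow.hasEdgeDisjointPaths (hf : G.IsFlow A s t j f) : G.HasEdgeDisjointPaths j t s :=
  let ⟨W, hW, _, hdisj⟩ := hf.exists_edgeDisjoint_paths
  ⟨W, hW, hdisj⟩

def residualReach (G : Multigraph V E) (A : Finset E) (f : E → Option (V × V)) (s : V) :
    Set V :=
  {w | ReflTransGen (G.StepRel (Residual A f)) s w}

lemma IsFlow.exists_succ (hf : G.IsFlow A s t j f) (ht : t ∈ G.residualReach A f s) :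
    ∃ f', G.IsFlow A s t (j + 1) f' := by
  obtain ⟨p, hp, hpres⟩ := exists_isPath_of_reflTransGen ht
  obtain ⟨f', hf', hnet, -⟩ := hf.orientsWithin.exists_augment p hp hpres
  exact ⟨f', hf', by rw [hnet, hf.netOutflow_eq, succ_nsmul]⟩

lemma OrientsWithin.mem_residualReach (hf : G.OrientsWithin A f) {w : V}
    (h : G.Reachable (↑A \ ↑(leavingEdges A f (G.residualReach A f s))) s w) :
    w ∈ G.residualReach A f s := by
  induction h with
  | refl => exact ReflTransGen.refl
  | @tail x y _ hstep hx =>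
    obtain ⟨e, he, heA, heF⟩ := hstep
    by_contra hy
    rcases hfe : f e with _ | ⟨a, b⟩
    · exact hy (hx.tail ⟨e, he, .inl ⟨heA, hfe⟩⟩)
    · have hab := (hf e a b hfe).2
      rw [he, Sym2.eq_iff] at hab
      rcases hab with ⟨rfl, rfl⟩ | ⟨rfl, rfl⟩
      · classical
        exact heF (mem_filter.2 ⟨heA, _, _, hfe, hx, hy⟩)
      · exact hy (hx.tail ⟨e, he, .inr hfe⟩)

lemma IsFlow.card_leavingEdges_residualReach_le (hf : G.IsFlow A s t j f)
    (ht : t ∉ G.residualReach A f s) :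
    #(leavingEdges A f (G.residualReach A f s)) ≤ j := by
  have hR : ∀ e a b, f e = some (a, b) →
      b ∈ G.residualReach A f s → a ∈ G.residualReach A f s := fun e a b hfe hb =>
    ReflTransGen.tail hb ⟨e, (hf.orientsWithin e a b hfe).2.trans Sym2.eq_swap, .inr hfe⟩
  have := hf.card_leavingEdges_le _ hR
  rw [Set.indicator_of_mem (show s ∈ G.residualReach A f s from .refl),
    Set.indicator_of_notMem ht] at this
  simp at this
  exact_mod_cast this

/-- **Menger's theorem** (edge version), for cuts inside a finite set of edges. -/
theorem hasEdgeDisjointPaths_of_forall_reachable {k : ℕ} {u v : V} (B : Finset E)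
    (h : ∀ F : Finset E, #F < k → G.Reachable (↑B \ ↑F) u v) : G.HasEdgeDisjointPaths k u v := by
  suffices ∀ j ≤ k, ∃ f, G.IsFlow B v u j f by
    obtain ⟨f, hf⟩ := this k le_rfl
    exact hf.hasEdgeDisjointPaths
  intro j hj
  induction j with
  | zero => exact ⟨fun _ => none, ⟨fun _ _ _ h => (nomatch h), by simp [netOutflow, outflow]⟩⟩
  | succ j ih =>
    obtain ⟨f, hf⟩ := ih (by omega)
    by_cases hu : u ∈ G.residualReach B f v
    · exact hf.exists_succ hu
    · have hcut := (h _ ((hf.card_leavingEdges_residualReach_le hu).trans_lt hj)).symm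
      exact absurd (hf.orientsWithin.mem_residualReach hcut) hu

end Flow

variable {k : ℕ}

lemma exists_forall_notMem_of_card_lt {ι : Type*} [Fintype ι] (l : ι → List E)
    (hl : ∀ i j, i ≠ j → ∀ e ∈ l i, e ∉ l j) {F : Finset E} (hF : #F < Fintype.card ι) :
    ∃ i, ∀ e ∈ l i, e ∉ F := by
  by_contra! h
  choose g hgl hgF using h
  obtain ⟨i, -, j, -, hij, hg⟩ :=
    exists_ne_map_eq_of_card_lt_of_maps_to (s := univ) (by simpa using hF) fun i _ => hgF i
  exact hl i j hij _ (hgl i) (hg ▸ hgl j)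

/-- Cuts are taken inside a finite edge set `B`, so that Menger's theorem applies in an
infinite multigraph. -/
def NoSmallEdgeCut (G : Multigraph V E) (k : ℕ) (u v : V) : Prop :=
  ∃ B : Finset E, ∀ F : Finset E, #F < k → G.Reachable (↑B \ ↑F) u v

namespace NoSmallEdgeCut

variable {u v w x y : V}

lemma refl (u : V) : G.NoSmallEdgeCut k u u :=
  ⟨∅, fun _ _ => Relation.ReflTransGen.refl⟩

lemma symm (h : G.NoSmallEdgeCut k u v) : G.NoSmallEdgeCut k v u :=
  let ⟨B, hB⟩ := h
  ⟨B, fun F hF => (hB F hF).symm⟩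

lemma trans [DecidableEq E] (h : G.NoSmallEdgeCut k u v) (h' : G.NoSmallEdgeCut k v w) :
    G.NoSmallEdgeCut k u w := by
  obtain ⟨B, hB⟩ := h
  obtain ⟨B', hB'⟩ := h'
  exact ⟨B ∪ B', fun F hF =>
    ((hB F hF).mono (Set.sdiff_subset_sdiff_left (coe_subset.2 subset_union_left))).trans
      ((hB' F hF).mono (Set.sdiff_subset_sdiff_left (coe_subset.2 subset_union_right)))⟩

lemma exists_reachable_of_walk [DecidableEq E] (hx : G.NoSmallEdgeCut k x u)
    (hy : G.NoSmallEdgeCut k y v) (p : G.Walk x y) :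
    ∃ B : Finset E, ∀ F : Finset E, #F < k → (∀ e ∈ p.edges, e ∉ F) →
      G.Reachable (↑B \ ↑F) u v := by
  obtain ⟨Bx, hBx⟩ := hx
  obtain ⟨By, hBy⟩ := hy
  refine ⟨Bx ∪ By ∪ p.edges.toFinset, fun F hF hpF => ?_⟩
  have hp : G.Reachable (↑(Bx ∪ By ∪ p.edges.toFinset) \ ↑F) x y :=
    p.reachable fun e he => ⟨by simp [he], hpF e he⟩
  have hsubx : ↑Bx \ ↑F ⊆ (↑(Bx ∪ By ∪ p.edges.toFinset) \ ↑F : Set E) :=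
    Set.sdiff_subset_sdiff_left (coe_subset.2 (subset_union_left.trans subset_union_left))
  have hsuby : ↑By \ ↑F ⊆ (↑(Bx ∪ By ∪ p.edges.toFinset) \ ↑F : Set E) :=
    Set.sdiff_subset_sdiff_left (coe_subset.2 (subset_union_right.trans subset_union_left))
  exact (((hBx F hF).mono hsubx).symm.trans hp).trans ((hBy F hF).mono hsuby)

end NoSmallEdgeCut

lemma noSmallEdgeCut_of_edgeDisjoint_walks {u v : V} (W : Fin k → Σ x y : V, G.Walk x y)
    (hdisj : ∀ i j, i ≠ j → ∀ e ∈ (W i).2.2.edges, e ∉ (W j).2.2.edges)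
    (hends : ∀ i, (G.NoSmallEdgeCut k (W i).1 u ∧ G.NoSmallEdgeCut k (W i).2.1 v) ∨
      (G.NoSmallEdgeCut k (W i).1 v ∧ G.NoSmallEdgeCut k (W i).2.1 u)) :
    G.NoSmallEdgeCut k u v := by
  classical
  have hB : ∀ i, ∃ B : Finset E, ∀ F : Finset E, #F < k → (∀ e ∈ (W i).2.2.edges, e ∉ F) →
      G.Reachable (↑B \ ↑F) u v := by
    intro i
    rcases hends i with ⟨hx, hy⟩ | ⟨hx, hy⟩
    · exact hx.exists_reachable_of_walk hy _
    · obtain ⟨B, hB⟩ := hx.exists_reachable_of_walk hy (W i).2.2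
      exact ⟨B, fun F hF hpF => (hB F hF hpF).symm⟩
  choose B hB using hB
  refine ⟨univ.biUnion B, fun F hF => ?_⟩
  obtain ⟨i, hi⟩ := exists_forall_notMem_of_card_lt (fun i => (W i).2.2.edges) hdisj
    (by simpa using hF)
  exact (hB i F hF hi).mono
    (Set.sdiff_subset_sdiff_left (coe_subset.2 (subset_biUnion_of_mem B (mem_univ i))))

lemma rel_iff_noSmallEdgeCut {u v : V} : G.Rel k u v ↔ G.NoSmallEdgeCut k u v := by
  refine ⟨?_, fun ⟨B, hB⟩ => .inr (hasEdgeDisjointPaths_of_forall_reachable B hB)⟩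
  rintro (rfl | ⟨W, -, hW⟩)
  · exact .refl u
  · exact noSmallEdgeCut_of_edgeDisjoint_walks (fun i => ⟨u, v, W i⟩) hW
      fun _ => .inl ⟨.refl u, .refl v⟩

end Multigraph

theorem edgeDisjoint_paths_between_classes_le_general {V E : Type} (G : Multigraph V E)
    (k : ℕ) (C₁ C₂ : Set V)
    (h₁ : Multigraph.IsClassOf (G.Rel k) C₁) (h₂ : Multigraph.IsClassOf (G.Rel k) C₂)
    (hne : C₁ ≠ C₂)
    (n : ℕ) (f : Fin n → Σ u : V, Σ v : V, G.Walk u v)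
    (hends : ∀ i, ((f i).1 ∈ C₁ ∧ (f i).2.1 ∈ C₂) ∨ ((f i).1 ∈ C₂ ∧ (f i).2.1 ∈ C₁))
    (hdisj : ∀ i j, i ≠ j → ∀ e, e ∈ ((f i).2.2).edges → e ∉ ((f j).2.2).edges) :
    n ≤ k - 1 := by
  classical
  obtain ⟨v₁, rfl⟩ := h₁
  obtain ⟨v₂, rfl⟩ := h₂
  simp only [Set.mem_ofPred_eq, Multigraph.rel_iff_noSmallEdgeCut] at hends hne
  by_contra! hn
  have hkn : k ≤ n := by omega
  have h₁₂ : G.NoSmallEdgeCut k v₁ v₂ :=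
    Multigraph.noSmallEdgeCut_of_edgeDisjoint_walks (fun i => f (Fin.castLE hkn i))
      (fun i j hij => hdisj _ _ ((Fin.castLE_injective hkn).ne hij)) fun i => hends _
  exact hne (Set.ext fun x => ⟨fun h => h.trans h₁₂, fun h => h.trans h₁₂.symm⟩)

/-- Any family of pairwise edge-disjoint paths, each joining
two distinct equivalence classes `C₁` and `C₂` of `R^k`, has cardinality at
most `k - 1`. -/
theorem edgeDisjoint_paths_between_classes_le {V E : Type} (G : Multigraph V E)
    (k : ℕ) (hk : 0 < k) (C₁ C₂ : Set V)
    (h₁ : Multigraph.IsClassOf (G.Rel k) C₁) (h₂ : Multigraph.IsClassOf (G.Rel k) C₂)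
    (hne : C₁ ≠ C₂)
    (n : ℕ) (f : Fin n → Σ u : V, Σ v : V, G.Walk u v)
    (hpath : ∀ i, ((f i).2.2).IsPath)
    (hends : ∀ i, ((f i).1 ∈ C₁ ∧ (f i).2.1 ∈ C₂) ∨ ((f i).1 ∈ C₂ ∧ (f i).2.1 ∈ C₁))
    (hdisj : ∀ i j, i ≠ j → ∀ e, e ∈ ((f i).2.2).edges → e ∉ ((f j).2.2).edges) :
    n ≤ k - 1 :=
  edgeDisjoint_paths_between_classes_le_general G k C₁ C₂ h₁ h₂ hne n f hends hdisj
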